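/- For the resonance function χ(ξ, ξ₁) = ξ₁|ξ₁| + (ξ−ξ₁)|ξ−ξ₁| − ξ|ξ| and for ξ₁ ∈ [α/2, α], ξ − ξ₁ ∈ [N, N+α] with 0 < α ≤ 1 and N ≥ 1, one has αN ≤ |χ(ξ, ξ₁)| ≤ 2α(N + α); in particular |χ(ξ,ξ₁)| is comparable to αN. -/

import Mathlib

/-- The BO resonance function `χ(ξ,ξ₁) = ξ₁|ξ₁| + (ξ−ξ₁)|ξ−ξ₁| − ξ|ξ|`. -/
def BOresonance (ξ ξ₁ : ℝ) : ℝ :=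
  ξ₁ * |ξ₁| + (ξ - ξ₁) * |ξ - ξ₁| - ξ * |ξ|

theorem BOresonance_of_nonneg {ξ ξ₁ : ℝ} (h₁ : 0 ≤ ξ₁) (h₂ : 0 ≤ ξ - ξ₁) :
    BOresonance ξ ξ₁ = -(2 * ξ₁ * (ξ - ξ₁)) := by
  have hξ : 0 ≤ ξ := by linarith
  rw [BOresonance, abs_of_nonneg h₁, abs_of_nonneg h₂, abs_of_nonneg hξ]
  ring

theorem abs_BOresonance_of_nonneg {ξ ξ₁ : ℝ} (h₁ : 0 ≤ ξ₁) (h₂ : 0 ≤ ξ - ξ₁) :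
    |BOresonance ξ ξ₁| = 2 * ξ₁ * (ξ - ξ₁) := by
  rw [BOresonance_of_nonneg h₁ h₂, abs_neg, abs_of_nonneg (by positivity)]

theorem bo_resonance_comparable_general (α N ξ ξ₁ : ℝ)
    (hα : 0 < α) (hN : 1 ≤ N)
    (h₁ : ξ₁ ∈ Set.Icc (α / 2) α) (h₂ : ξ - ξ₁ ∈ Set.Icc N (N + α)) :
    α * N ≤ |BOresonance ξ ξ₁| ∧ |BOresonance ξ ξ₁| ≤ 2 * α * (N + α) := by
  obtain ⟨hξ₁_lower, hξ₁_upper⟩ := h₁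
  obtain ⟨hdiff_lower, hdiff_upper⟩ := h₂
  have hξ₁ : 0 ≤ ξ₁ := le_trans (by positivity) hξ₁_lower
  have hdiff : 0 ≤ ξ - ξ₁ := by linarith
  rw [abs_BOresonance_of_nonneg hξ₁ hdiff]
  constructor
  · calc α * N = 2 * (α / 2) * N := by ring
      _ ≤ 2 * ξ₁ * (ξ - ξ₁) := by gcongr
  · gcongr

/-- For `ξ₁ ∈ [α/2, α]`, `ξ − ξ₁ ∈ [N, N+α]` with `0 < α ≤ 1` and `N ≥ 1`,
one has `αN ≤ |χ(ξ,ξ₁)| ≤ 2α(N+α)`: the resonance is comparable to `αN`. -/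
theorem bo_resonance_comparable (α N ξ ξ₁ : ℝ)
    (hα : 0 < α) (hα1 : α ≤ 1) (hN : 1 ≤ N)
    (h₁ : ξ₁ ∈ Set.Icc (α / 2) α) (h₂ : ξ - ξ₁ ∈ Set.Icc N (N + α)) :
    α * N ≤ |BOresonance ξ ξ₁| ∧ |BOresonance ξ ξ₁| ≤ 2 * α * (N + α) :=
  bo_resonance_comparable_general α N ξ ξ₁ hα hN h₁ h₂
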